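/- Let m ≥ 2 be even and n ≥ 2 with gcd(m, n) = 1, and set δ := ⌊n/m⌋. Define A := ∑_{l=0}^{n−1} ∑_{k=1}^{2m−1} 2(ζ_{2m}^{2nk} − 1)/((1 − ζ_{2m}^{−k} ζ_{2n}^{−l})(1 − ζ_{2m}^{−k} ζ_{2n}^{l})) and B := ∑_{l=0}^{n−1} ∑_{k=0}^{2m−1} 2((−1)^n ζ_{2m}^{n(2k+1)} − 1)/(1 + ζ_{2m}^{−(2k+1)}). Then (m + n + 1)/m + (A + B)/(4mn) = δ + 2 + ((−1)^δ − 1)/2. -/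
import Mathlib


/-- `ζ_N = exp(2πi/N)`. -/
noncomputable def zeta (N : ℕ) : ℂ := Complex.exp (2 * Real.pi * Complex.I / N)

open Finset Complex


lemma zeta_prim (N : ℕ) (hN : N ≠ 0) : IsPrimitiveRoot (zeta N) N := by
  simpa [zeta] using Complex.isPrimitiveRoot_exp N hN

-- char sum
lemma char_sum {N : ℕ} (hN : 0 < N) (z : ℂ) (hz : z ^ N = 1) :
    ∑ l ∈ range N, z ^ l = if z = 1 then (N : ℂ) else 0 := by
  split_ifs with h
  · simp [h]
  · have := geom_sum_eq h N
    rw [this, hz, sub_self, zero_div]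

-- sum over range = first + Icc
lemma sum_Icc_eq (M : ℕ) (hM : 1 ≤ M) (f : ℕ → ℂ) :
    ∑ k ∈ range M, f k = f 0 + ∑ k ∈ Icc 1 (M-1), f k := by
  have h1 : Icc 1 (M-1) = Ico 1 M := by
    rw [← Finset.Ico_add_one_right_eq_Icc]; congr 1; omega
  rw [h1, range_eq_Ico, Finset.sum_eq_sum_Ico_succ_bot hM]

lemma telesc (w : ℂ) (hw : w ≠ 0) (d : ℕ) :
    (1 - w) * ∑ j ∈ Icc 1 d, (w^j)⁻¹ = (w^d)⁻¹ - 1 := by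
  induction d with
  | zero => simp
  | succ d ih =>
    rw [Finset.sum_Icc_succ_top (by omega), mul_add, ih]
    have h1 : w * (w ^ (d+1))⁻¹ = (w^d)⁻¹ := by
      rw [pow_succ']; rw [mul_inv]
      rw [← mul_assoc, mul_inv_cancel₀ hw, one_mul]
    rw [one_sub_mul, h1]
    ring

lemma telesc2 (x : ℂ) (hx : x ≠ 0) (C : ℕ) :
    (x - x⁻¹) * ∑ s ∈ range C, x ^ ((C:ℤ) - 1 - 2*s) = x ^ (C:ℤ) - x ^ (-(C:ℤ)) := by
  have key : ∀ s ∈ range C, (x - x⁻¹) * x ^ ((C:ℤ) - 1 - 2*s)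
      = x ^ ((C:ℤ) - 2*(s:ℤ)) - x ^ ((C:ℤ) - 2*(((s+1:ℕ)):ℤ)) := by
    intro s _
    have e1 : (C:ℤ) - 2*(s:ℤ) = ((C:ℤ) - 1 - 2*s) + 1 := by ring
    have e2 : (C:ℤ) - 2*(((s+1:ℕ)):ℤ) = ((C:ℤ) - 1 - 2*s) + (-1) := by push_cast; ring
    rw [e1, e2, zpow_add₀ hx, zpow_add₀ hx, zpow_one, zpow_neg_one]
    ring
  rw [Finset.mul_sum, Finset.sum_congr rfl key]
  rw [Finset.sum_range_sub' (fun s => x ^ ((C:ℤ) - 2*(s:ℤ))) C]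
  rw [show (C:ℤ) - 2*((0:ℕ):ℤ) = (C:ℤ) by push_cast; ring,
     show (C:ℤ) - 2*((C:ℕ):ℤ) = -(C:ℤ) by push_cast; ring]

lemma gauss_Icc (d : ℕ) : ∑ j ∈ Icc 1 d, (j:ℂ) = d*(d+1)/2 := by
  induction d with
  | zero => simp
  | succ d ih =>
    rw [Finset.sum_Icc_succ_top (by omega), ih]
    push_cast
    ring

lemma neg_one_Icc (d : ℕ) : ∑ j ∈ Icc 1 d, (-1:ℂ)^j = ((-1)^d - 1)/2 := by
  induction d with
  | zero => simp
  | succ d ih =>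
    rw [Finset.sum_Icc_succ_top (by omega), ih]
    rw [pow_succ]
    ring


lemma sum_G {N : ℕ} (hN : 0 < N) {η : ℂ} (hη : IsPrimitiveRoot η N)
    (a : ℕ) (ha1 : 1 ≤ a) (ha2 : a ≤ N) (x : ℂ) (hx : x ^ N ≠ 1) :
    ∑ k ∈ range N, η ^ (a * k) / (1 - η ^ k * x)
      = N * x ^ (N - a) / (1 - x ^ N) := by
  have hηN : η ^ N = 1 := hη.pow_eq_one
  have hxN : (1 : ℂ) - x ^ N ≠ 0 := sub_ne_zero.2 (Ne.symm hx)
  have hpowN : ∀ k : ℕ, (η ^ k * x) ^ N = x ^ N := by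
    intro k
    rw [mul_pow, ← pow_mul, mul_comm k N, pow_mul, hηN, one_pow, one_mul]
  have hden : ∀ k : ℕ, (1 : ℂ) - η ^ k * x ≠ 0 := by
    intro k h
    apply hx
    have h1 : η ^ k * x = 1 := (sub_eq_zero.mp h).symm
    rw [← hpowN k, h1, one_pow]
  have char : ∀ z : ℂ, z ^ N = 1 → ∑ l ∈ range N, z ^ l = if z = 1 then (N : ℂ) else 0 := by
    intro z hz
    split_ifs with h
    · simp [h]
    · rw [geom_sum_eq h N, hz, sub_self, zero_div]
  have step1 : ∀ k ∈ range N, η ^ (a*k) / (1 - η ^ k * x)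
      = (∑ t ∈ range N, (η ^ (a+t)) ^ k * x ^ t) / (1 - x ^ N) := by
    intro k _
    rw [div_eq_div_iff (hden k) hxN]
    have hgeo : (∑ t ∈ range N, (η^k * x)^t) * (1 - η^k*x) = 1 - x^N := by
      have h2 := geom_sum_mul (η^k*x) N
      calc (∑ t ∈ range N, (η^k * x)^t) * (1 - η^k*x)
          = -((∑ t ∈ range N, (η^k * x)^t) * ((η^k*x) - 1)) := by ring
        _ = -((η^k*x)^N - 1) := by rw [h2]
        _ = 1 - x^N := by rw [hpowN k]; ring
    have hsum : ∑ t ∈ range N, (η^(a+t))^k * x^t = η^(a*k) * ∑ t ∈ range N, (η^k*x)^t := by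
      rw [Finset.mul_sum]
      refine Finset.sum_congr rfl (fun t _ => ?_)
      have h3 : (a+t)*k = a*k + k*t := by ring
      rw [mul_pow, ← pow_mul, ← pow_mul, ← mul_assoc, ← pow_add, h3]
    rw [hsum, mul_assoc, hgeo]
  rw [Finset.sum_congr rfl step1, ← Finset.sum_div]
  congr 1
  rw [Finset.sum_comm]
  have step2 : ∀ t ∈ range N, ∑ k ∈ range N, (η ^ (a+t)) ^ k * x ^ t
      = (if η ^ (a+t) = 1 then (N:ℂ) else 0) * x ^ t := by
    intro t _
    rw [← Finset.sum_mul]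
    congr 1
    exact char _ (by rw [← pow_mul, mul_comm (a+t) N, pow_mul, hηN, one_pow])
  rw [Finset.sum_congr rfl step2]
  rw [Finset.sum_eq_single (N - a)]
  · rw [if_pos, mul_comm]
    have : a + (N - a) = N := by omega
    rw [this, hηN]
  · intro t ht hne
    rw [if_neg, zero_mul]
    intro heq
    obtain ⟨c, hc⟩ := (hη.pow_eq_one_iff_dvd _).mp heq
    have ht' : t < N := mem_range.mp ht
    rcases Nat.lt_or_ge c 2 with h|h
    · interval_cases c <;> simp at hc <;> omega
    · have h4 : N*2 ≤ N*c := Nat.mul_le_mul_left N h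
      have h5 : a + t < N*2 := by omega
      omega
  · intro h
    exact absurd (mem_range.mpr (by omega)) h

lemma sum_inv_sub_one {N : ℕ} (hN : 2 ≤ N) {η : ℂ} (hη : IsPrimitiveRoot η N) :
    ∑ k ∈ Icc 1 (N-1), 1/(η ^ k - 1) = -((N:ℂ) - 1)/2 := by
  have hη0 : η ≠ 0 := hη.ne_zero (by omega)
  have key : ∑ k ∈ Icc 1 (N-1), ((1:ℂ)/(η^k - 1) + 1/(η^(N-k) - 1))
      = ∑ k ∈ Icc 1 (N-1), (-1:ℂ) := by
    refine Finset.sum_congr rfl (fun k hk => ?_)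
    obtain ⟨h1, h2⟩ := mem_Icc.mp hk
    have hy : η ^ k ≠ 1 := hη.pow_ne_one_of_pos_of_lt (by omega) (by omega)
    have hinv : η ^ (N-k) = (η ^ k)⁻¹ := by
      apply eq_inv_of_mul_eq_one_left
      rw [← pow_add, show N-k+k = N by omega, hη.pow_eq_one]
    rw [hinv]
    have hy0 : η ^ k ≠ 0 := pow_ne_zero _ hη0
    have hs1 : η ^ k - 1 ≠ 0 := sub_ne_zero.2 hy
    have hs2 : (η ^ k)⁻¹ - 1 ≠ 0 := sub_ne_zero.2 (by rw [Ne, inv_eq_one]; exact hy)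
    rw [div_add_div _ _ hs1 hs2, div_eq_iff (mul_ne_zero hs1 hs2)]
    have hyy : η^k * (η^k)⁻¹ = 1 := mul_inv_cancel₀ hy0
    linear_combination hyy
  have reidx : ∑ k ∈ Icc 1 (N-1), (1:ℂ)/(η^(N-k) - 1) = ∑ k ∈ Icc 1 (N-1), 1/(η^k - 1) := by
    apply Finset.sum_nbij' (fun k => N - k) (fun k => N - k) <;> intro a ha <;>
      simp only [mem_Icc] at * <;> try omega
  rw [Finset.sum_add_distrib, reidx, Finset.sum_const, Nat.card_Icc] at key
  have hcard : (N - 1 + 1 - 1) = N - 1 := by omega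
  rw [hcard] at key
  have hc : ((N-1 : ℕ) : ℂ) = (N:ℂ) - 1 := by
    push_cast [Nat.cast_sub (by omega : 1 ≤ N)]; ring
  rw [nsmul_eq_mul, hc] at key
  linear_combination key/2

lemma sum_dvd_shift {m : ℕ} (hm : 0 < m) (F : ℕ → ℂ) (n : ℕ) :
    ∑ j ∈ range n, (if m ∣ (j+1) then F (j+1) else 0)
      = ∑ q ∈ Icc 1 (n / m), F (m * q) := by
  induction n with
  | zero => simp
  | succ n ih =>
    rw [Finset.sum_range_succ, ih, Nat.succ_div]
    by_cases h : m ∣ (n+1)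
    · simp only [h, if_true]
      obtain ⟨q, hq⟩ := h
      have hq1 : 1 ≤ q := by
        rcases Nat.eq_zero_or_pos q with h0|h0
        · subst h0; simp at hq
        · exact h0
      have e0 : m*(q-1)+m = m*q := by
        have h5 := Nat.mul_succ m (q-1)
        rw [Nat.succ_eq_add_one, Nat.sub_add_cancel hq1] at h5
        omega
      have h2 : n / m = q - 1 := by
        apply Nat.div_eq_of_lt_le
        · rw [mul_comm]; omega
        · rw [Nat.sub_add_cancel hq1, mul_comm]; omega
      rw [h2, Finset.sum_Icc_succ_top (by omega)]
      congr 2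
      rw [Nat.sub_add_cancel hq1]
      omega
    · simp [h]


lemma inner_A0 {m n : ℕ} (hm2 : 2 ≤ m) (hn : 2 ≤ n) (hgcd : Nat.gcd m n = 1) :
    ∑ k ∈ Icc 1 (2*m-1), 2 * (zeta (2*m) ^ (2*n*k) - 1) /
        ((1 - (zeta (2*m))⁻¹ ^ k) * (1 - (zeta (2*m))⁻¹ ^ k))
      = -((2*m:ℕ) - 2*((n % m : ℕ)):ℂ) * ((2*m:ℕ) - 1)
        + 2 * ((((2*m:ℕ):ℂ) - 2*((n % m : ℕ)) - 1) * (2*m:ℕ)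
          - ((2*m:ℕ) - 2*((n % m : ℕ)):ℂ) * (((2*m:ℕ):ℂ) - 2*((n % m : ℕ)) - 1)/2) := by
  set M := 2*m with hMdef
  have hM4 : 4 ≤ M := by omega
  have hζ : IsPrimitiveRoot (zeta M) M := zeta_prim M (by omega)
  set ζ := zeta M with hζdef
  have hζ0 : ζ ≠ 0 := hζ.ne_zero (by omega)
  have hη : IsPrimitiveRoot ζ⁻¹ M := hζ.inv
  have hη0 : ζ⁻¹ ≠ 0 := inv_ne_zero hζ0
  -- r := n % m ≠ 0
  have hr : n % m ≠ 0 := by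
    intro h
    have hdvd : m ∣ n := Nat.dvd_of_mod_eq_zero h
    have := Nat.gcd_eq_left hdvd
    omega
  have hrm : n % m < m := Nat.mod_lt n (by omega)
  set a := M - 2*(n % m) with hadef
  have ha2 : 2 ≤ a := by omega
  have haM : a ≤ M - 2 := by omega
  -- exponent relation
  have hrel : 2*n + a = M*(n/m + 1) := by
    have h1 := Nat.div_add_mod n m
    have h2 : M*(n/m+1) = 2*(m*(n/m)) + M := by rw [hMdef]; ring
    omega
  have hkey : ∀ k : ℕ, ζ ^ (2*n*k) = ζ⁻¹ ^ (a*k) := by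
    intro k
    rw [inv_pow]
    apply eq_inv_of_mul_eq_one_left
    rw [← pow_add]
    have h3 : 2*n*k + a*k = M*((n/m+1)*k) := by
      rw [← add_mul, hrel, mul_assoc]
    rw [h3, pow_mul, hζ.pow_eq_one, one_pow]
  have step : ∀ k ∈ Icc 1 (M-1),
      2 * (ζ ^ (2*n*k) - 1) / ((1 - ζ⁻¹ ^ k) * (1 - ζ⁻¹ ^ k))
        = 2*(a:ℂ)/(ζ⁻¹^k - 1) + 2 * ∑ t ∈ range a, ∑ s ∈ range t, (ζ⁻¹^k)^s := by
    intro k hk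
    obtain ⟨hk1, hk2⟩ := mem_Icc.mp hk
    set y := ζ⁻¹ ^ k with hy
    have hy1 : y ≠ 1 := hη.pow_ne_one_of_pos_of_lt (by omega) (by omega)
    have hys : y - 1 ≠ 0 := sub_ne_zero.2 hy1
    have hys' : (1:ℂ) - y ≠ 0 := sub_ne_zero.2 (Ne.symm hy1)
    rw [hkey k, mul_comm a k, pow_mul, ← hy]
    have h2 : y^a - 1 = (y-1) * ∑ t ∈ range a, y^t := by
      have := geom_sum_mul y a
      linear_combination -this
    have h3 : ∑ t ∈ range a, y^t
        = (a:ℂ) + (y-1) * ∑ t ∈ range a, ∑ s ∈ range t, y^s := by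
      have h4 : ∀ t ∈ range a, y^t = 1 + (y-1) * ∑ s ∈ range t, y^s := by
        intro t _
        have := geom_sum_mul y t
        linear_combination -this
      rw [Finset.sum_congr rfl h4, Finset.sum_add_distrib, Finset.sum_const, card_range,
        ← Finset.mul_sum]
      simp [nsmul_eq_mul]
    rw [h2, h3]
    field_simp
    ring
  rw [Finset.sum_congr rfl step, Finset.sum_add_distrib]
  -- first part
  have part1 : ∑ k ∈ Icc 1 (M-1), 2*(a:ℂ)/(ζ⁻¹^k - 1)
      = 2*(a:ℂ) * (-(((M:ℕ):ℂ) - 1)/2) := by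
    rw [← sum_inv_sub_one (by omega) hη, Finset.mul_sum]
    refine Finset.sum_congr rfl (fun k _ => ?_)
    rw [mul_one_div]
  -- second part
  have hpowc : ∀ k s : ℕ, ((ζ⁻¹^k)^s : ℂ) = (ζ⁻¹^s)^k := by
    intro k s
    rw [← pow_mul, mul_comm, pow_mul]
  have part2 : ∑ k ∈ Icc 1 (M-1), (2:ℂ) * ∑ t ∈ range a, ∑ s ∈ range t, (ζ⁻¹^k)^s
      = 2 * (((a:ℂ)-1) * M - (a:ℂ)*((a:ℂ)-1)/2) := by
    rw [← Finset.mul_sum]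
    congr 1
    have swap : ∑ k ∈ Icc 1 (M-1), ∑ t ∈ range a, ∑ s ∈ range t, (ζ⁻¹^k)^s
        = ∑ t ∈ range a, ∑ s ∈ range t, ∑ k ∈ Icc 1 (M-1), (ζ⁻¹^s)^k := by
      rw [Finset.sum_comm]
      refine Finset.sum_congr rfl (fun t _ => ?_)
      rw [Finset.sum_comm]
      exact Finset.sum_congr rfl (fun s _ => Finset.sum_congr rfl (fun k _ => hpowc k s))
    rw [swap]
    have inner : ∀ t ∈ range a, ∑ s ∈ range t, ∑ k ∈ Icc 1 (M-1), (ζ⁻¹^s)^k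
        = (if 0 < t then ((M:ℕ):ℂ) else 0) - (t:ℂ) := by
      intro t ht
      have ht' : t < a := mem_range.mp ht
      have hsval : ∀ s ∈ range t, ∑ k ∈ Icc 1 (M-1), (ζ⁻¹^s)^k
          = (if s = 0 then ((M:ℕ):ℂ) else 0) - 1 := by
        intro s hs
        have hs' : s < t := mem_range.mp hs
        have hfull : ∑ k ∈ range M, (ζ⁻¹^s)^k = if ζ⁻¹^s = 1 then ((M:ℕ):ℂ) else 0 :=
          char_sum (by omega) _ (by rw [← pow_mul, mul_comm, pow_mul, hη.pow_eq_one, one_pow])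
        have hsplit := sum_Icc_eq M (by omega) (fun k => (ζ⁻¹^s)^k)
        rw [hfull] at hsplit
        have hcond : (ζ⁻¹^s = 1) = (s = 0) := by
          apply propext
          constructor
          · intro h
            by_contra hs0
            exact hη.pow_ne_one_of_pos_of_lt (by omega) (by omega) h
          · intro h; rw [h, pow_zero]
        simp only [hcond] at hsplit
        simp only [pow_zero] at hsplit
        linear_combination -hsplit
      rw [Finset.sum_congr rfl hsval, Finset.sum_sub_distrib, Finset.sum_const, card_range]
      congr 1
      · rw [Finset.sum_ite_eq' (range t) 0 (fun _ => ((M:ℕ):ℂ))]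
        congr 1
        simp [mem_range]
      · simp [nsmul_eq_mul]
    rw [Finset.sum_congr rfl inner, Finset.sum_sub_distrib]
    have g1 : ∑ t ∈ range a, (if 0 < t then ((M:ℕ):ℂ) else 0) = ((a:ℂ)-1) * M := by
      rw [show a = (a-1)+1 by omega, Finset.sum_range_succ']
      simp only [Nat.succ_pos, if_true, lt_irrefl, if_neg (lt_irrefl 0), add_zero]
      rw [Finset.sum_const, card_range, nsmul_eq_mul]
      push_cast [show ((a-1+1) - 1 : ℕ) = a - 1 by omega]
      rw [Nat.cast_sub (by omega)]
      push_cast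
      ring
    have g2 : ∑ t ∈ range a, (t:ℂ) = (a:ℂ)*((a:ℂ)-1)/2 := by
      have h5 := sum_Icc_eq a (by omega) (fun t => (t:ℂ))
      rw [gauss_Icc (a-1)] at h5
      rw [h5, Nat.cast_sub (by omega)]
      push_cast
      ring
    rw [g1, g2]
  rw [part1, part2]
  have hcast : ((a:ℕ):ℂ) = ((M:ℕ):ℂ) - 2*((n % m : ℕ):ℂ) := by
    rw [hadef, Nat.cast_sub (by omega)]
    push_cast
    ring
  rw [hcast]
  push_cast
  ring

lemma inner_A_pos {m n : ℕ} (hm2 : 2 ≤ m) (hn : 2 ≤ n) (hgcd : Nat.gcd m n = 1)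
    (l : ℕ) (hl1 : 1 ≤ l) (hln : l < n) :
    ∑ k ∈ Icc 1 (2*m-1), 2 * (zeta (2*m) ^ (2*n*k) - 1) /
        ((1 - (zeta (2*m))⁻¹ ^ k * (zeta (2*n))⁻¹ ^ l) *
          (1 - (zeta (2*m))⁻¹ ^ k * zeta (2*n) ^ l))
      = (-4 * (m:ℂ)) * ∑ j ∈ Icc 1 (n/m), ∑ s ∈ range (2*m*j - 1),
          ((zeta n) ^ ((s:ℤ) + 1 - (m:ℤ)*(j:ℤ))) ^ l := by
  set M := 2*m with hMdef
  have hM4 : 4 ≤ M := by omega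
  have hζ : IsPrimitiveRoot (zeta M) M := zeta_prim M (by omega)
  set ζ := zeta M with hζdef
  have hζ0 : ζ ≠ 0 := hζ.ne_zero (by omega)
  have hη : IsPrimitiveRoot ζ⁻¹ M := hζ.inv
  have hξ : IsPrimitiveRoot (zeta (2*n)) (2*n) := zeta_prim _ (by omega)
  set ξ := zeta (2*n) with hξdef
  have hξ0 : ξ ≠ 0 := hξ.ne_zero (by omega)
  have hτ : IsPrimitiveRoot ξ⁻¹ (2*n) := hξ.inv
  set ν := zeta n with hνdef
  have hsq : ξ^2 = ν := by
    rw [hξdef, hνdef, zeta, zeta, ← Complex.exp_nat_mul]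
    congr 1
    have h1 : ((2*n:ℕ):ℂ) = 2*(n:ℂ) := by push_cast; ring
    rw [h1]
    have hn0 : (n:ℂ) ≠ 0 := Nat.cast_ne_zero.mpr (by omega)
    field_simp
    ring
  set u := (ξ⁻¹)^l with hudef
  have hu0 : u ≠ 0 := pow_ne_zero _ (inv_ne_zero hξ0)
  have huv : ξ^l = u⁻¹ := by rw [hudef, inv_pow, inv_inv]
  have hu2 : u^2 ≠ 1 := by
    rw [hudef, ← pow_mul]
    exact hτ.pow_ne_one_of_pos_of_lt (by omega) (by omega)
  have hcop : Nat.Coprime n m := (Nat.coprime_iff_gcd_eq_one.mpr hgcd).symm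
  have huM : u^M ≠ 1 := by
    rw [hudef, ← pow_mul]
    intro h
    obtain ⟨c, hc⟩ := (hτ.pow_eq_one_iff_dvd _).mp h
    have e1 : l*M = 2*(l*m) := by rw [hMdef]; ring
    have e2 : 2*n*c = 2*(n*c) := by ring
    have h2 : n ∣ l * m := ⟨c, by omega⟩
    have h3 : n ∣ l := hcop.dvd_of_dvd_mul_right h2
    obtain ⟨e, he⟩ := h3
    rcases Nat.eq_zero_or_pos e with h0|h0
    · subst h0; simp at he; omega
    · have h4 : n * 1 ≤ n * e := Nat.mul_le_mul_left n h0
      omega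
  have hvM : (u⁻¹)^M ≠ 1 := by
    rw [inv_pow, Ne, inv_eq_one]; exact huM
  clear_value ζ ξ ν u
  have hcne : u - u⁻¹ ≠ 0 := by
    intro h
    apply hu2
    have h1 : u = u⁻¹ := sub_eq_zero.mp h
    calc u^2 = u * u := sq u
      _ = u * u⁻¹ := by nth_rewrite 2 [h1]; rfl
      _ = 1 := mul_inv_cancel₀ hu0
  -- a and key exponent identity (as in inner_A0)
  have hr : n % m ≠ 0 := by
    intro h
    have hdvd : m ∣ n := Nat.dvd_of_mod_eq_zero h
    have := Nat.gcd_eq_left hdvd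
    omega
  have hrm : n % m < m := Nat.mod_lt n (by omega)
  set a := M - 2*(n % m) with hadef
  have ha2 : 2 ≤ a := by omega
  have haM : a ≤ M - 2 := by omega
  have hrel : 2*n + a = M*(n/m + 1) := by
    have h1 := Nat.div_add_mod n m
    have h2 : M*(n/m+1) = 2*(m*(n/m)) + M := by rw [hMdef]; ring
    omega
  have hkey : ∀ k : ℕ, ζ ^ (2*n*k) = ζ⁻¹ ^ (a*k) := by
    intro k
    rw [inv_pow]
    apply eq_inv_of_mul_eq_one_left
    rw [← pow_add]
    have h3 : 2*n*k + a*k = M*((n/m+1)*k) := by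
      rw [← add_mul, hrel, mul_assoc]
    rw [h3, pow_mul, hζ.pow_eq_one, one_pow]
  -- denominators nonzero
  have hd1 : ∀ k : ℕ, (1:ℂ) - ζ⁻¹^k * u ≠ 0 := by
    intro k h
    apply huM
    have h1 : ζ⁻¹^k * u = 1 := (sub_eq_zero.mp h).symm
    have h2 : (ζ⁻¹^k * u)^M = u^M := by
      rw [mul_pow, ← pow_mul, mul_comm k M, pow_mul, hη.pow_eq_one, one_pow, one_mul]
    rw [← h2, h1, one_pow]
  have hd2 : ∀ k : ℕ, (1:ℂ) - ζ⁻¹^k * u⁻¹ ≠ 0 := by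
    intro k h
    apply hvM
    have h1 : ζ⁻¹^k * u⁻¹ = 1 := (sub_eq_zero.mp h).symm
    have h2 : (ζ⁻¹^k * u⁻¹)^M = (u⁻¹)^M := by
      rw [mul_pow, ← pow_mul, mul_comm k M, pow_mul, hη.pow_eq_one, one_pow, one_mul]
    rw [← h2, h1, one_pow]
  -- Step A : extend to range M
  have hstepA : ∑ k ∈ Icc 1 (M-1), 2 * (ζ ^ (2*n*k) - 1) / ((1 - ζ⁻¹^k * u) * (1 - ζ⁻¹^k * u⁻¹))
      = ∑ k ∈ range M, 2 * (ζ ^ (2*n*k) - 1) / ((1 - ζ⁻¹^k * u) * (1 - ζ⁻¹^k * u⁻¹)) := by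
    rw [sum_Icc_eq M (by omega)]
    norm_num
  -- Step B : partial fractions per k
  have hstepB : ∀ k ∈ range M,
      2 * (ζ ^ (2*n*k) - 1) / ((1 - ζ⁻¹^k * u) * (1 - ζ⁻¹^k * u⁻¹))
        = (2/(u - u⁻¹)) * (u * (ζ⁻¹^(a*k)/(1 - ζ⁻¹^k * u)) - u⁻¹ * (ζ⁻¹^(a*k)/(1 - ζ⁻¹^k * u⁻¹))
            - u * (ζ⁻¹^(M*k)/(1 - ζ⁻¹^k * u)) + u⁻¹ * (ζ⁻¹^(M*k)/(1 - ζ⁻¹^k * u⁻¹))) := by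
    intro k _
    rw [hkey k]
    have hMk : (ζ⁻¹:ℂ)^(M*k) = 1 := by rw [pow_mul, hη.pow_eq_one, one_pow]
    rw [hMk]
    have hcomb : u * (ζ⁻¹^(a*k)/(1 - ζ⁻¹^k * u)) - u⁻¹ * (ζ⁻¹^(a*k)/(1 - ζ⁻¹^k * u⁻¹))
          - u * ((1:ℂ)/(1 - ζ⁻¹^k * u)) + u⁻¹ * ((1:ℂ)/(1 - ζ⁻¹^k * u⁻¹))
        = (u * ζ⁻¹^(a*k) - u)/(1 - ζ⁻¹^k * u) - (u⁻¹ * ζ⁻¹^(a*k) - u⁻¹)/(1 - ζ⁻¹^k * u⁻¹) := by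
      ring
    rw [hcomb, div_sub_div _ _ (hd1 k) (hd2 k)]
    have hnum : (u * ζ⁻¹^(a*k) - u) * (1 - ζ⁻¹^k * u⁻¹) - (1 - ζ⁻¹^k * u) * (u⁻¹ * ζ⁻¹^(a*k) - u⁻¹)
        = (ζ⁻¹^(a*k) - 1) * (u - u⁻¹) := by
      ring
    rw [hnum, div_mul_div_comm,
      div_eq_div_iff (mul_ne_zero (hd1 k) (hd2 k)) (mul_ne_zero hcne (mul_ne_zero (hd1 k) (hd2 k)))]
    ring
  rw [huv, hstepA, Finset.sum_congr rfl hstepB, ← Finset.mul_sum]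
  have hsplit : ∑ k ∈ range M,
      (u * (ζ⁻¹^(a*k)/(1 - ζ⁻¹^k * u)) - u⁻¹ * (ζ⁻¹^(a*k)/(1 - ζ⁻¹^k * u⁻¹))
        - u * (ζ⁻¹^(M*k)/(1 - ζ⁻¹^k * u)) + u⁻¹ * (ζ⁻¹^(M*k)/(1 - ζ⁻¹^k * u⁻¹)))
      = u * (∑ k ∈ range M, ζ⁻¹^(a*k)/(1 - ζ⁻¹^k * u))
        - u⁻¹ * (∑ k ∈ range M, ζ⁻¹^(a*k)/(1 - ζ⁻¹^k * u⁻¹))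
        - u * (∑ k ∈ range M, ζ⁻¹^(M*k)/(1 - ζ⁻¹^k * u))
        + u⁻¹ * (∑ k ∈ range M, ζ⁻¹^(M*k)/(1 - ζ⁻¹^k * u⁻¹)) := by
    rw [Finset.sum_add_distrib, Finset.sum_sub_distrib, Finset.sum_sub_distrib,
      ← Finset.mul_sum, ← Finset.mul_sum, ← Finset.mul_sum, ← Finset.mul_sum]
  rw [hsplit]
  rw [sum_G (by omega) hη a (by omega) (by omega) u huM,
    sum_G (by omega) hη a (by omega) (by omega) u⁻¹ hvM,
    sum_G (by omega) hη M (by omega) (le_refl M) u huM,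
    sum_G (by omega) hη M (by omega) (le_refl M) u⁻¹ hvM]
  -- telescoping replacement
  set d := n / m with hddef
  set w := u^M with hwdef
  have hw0 : w ≠ 0 := pow_ne_zero _ hu0
  have hw1 : (1:ℂ) - w ≠ 0 := sub_ne_zero.2 (Ne.symm huM)
  have hwi1 : (1:ℂ) - w⁻¹ ≠ 0 := by
    rw [Ne, sub_eq_zero]
    intro h
    exact huM (by rw [hwdef] at h ⊢; rw [← inv_inv (u^M), ← h, inv_one])
  have hub : u^(M - a) = (w^d)⁻¹ := by
    apply eq_inv_of_mul_eq_one_left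
    rw [hwdef, ← pow_mul, ← pow_add]
    have h1 := Nat.div_add_mod n m
    have h2 : M*d = 2*(m*(n/m)) := by rw [hMdef, hddef]; ring
    have h3 : M - a + M*d = 2*n := by omega
    rw [h3, hudef, ← pow_mul, mul_comm l (2*n), pow_mul, hτ.pow_eq_one, one_pow]
  have hubi : (u⁻¹)^(M - a) = w^d := by
    rw [inv_pow, hub, inv_inv]
  have huiM : (u⁻¹)^M = w⁻¹ := by rw [inv_pow, hwdef]
  set P : ℂ := ∑ j ∈ Icc 1 d, (w^j)⁻¹ with hPdef
  set P' : ℂ := ∑ j ∈ Icc 1 d, w^j with hP'def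
  have hP : u^(M-a) - 1 = (1-w) * P := by
    rw [hub, hPdef, telesc w hw0 d]
  have hP' : (u⁻¹)^(M-a) - 1 = (1-w⁻¹) * P' := by
    rw [hubi, hP'def]
    have h4 := telesc w⁻¹ (inv_ne_zero hw0) d
    simp only [inv_pow, inv_inv] at h4
    rw [h4]
  have t1 : (M:ℂ)*u^(M-a)/(1-w) = (M:ℂ)*P + (M:ℂ)/(1-w) := by
    rw [div_eq_iff hw1, add_mul, div_mul_cancel₀ _ hw1]
    linear_combination (M:ℂ)*hP
  have t2 : (M:ℂ)*(u⁻¹)^(M-a)/(1-w⁻¹) = (M:ℂ)*P' + (M:ℂ)/(1-w⁻¹) := by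
    rw [div_eq_iff hwi1, add_mul, div_mul_cancel₀ _ hwi1]
    linear_combination (M:ℂ)*hP'
  rw [huiM, t1, t2]
  have hE : u * ((M:ℂ)*P + (M:ℂ)/(1-w)) - u⁻¹ * ((M:ℂ)*P' + (M:ℂ)/(1-w⁻¹))
      - u * ((M:ℂ)*u^(M-M)/(1-w)) + u⁻¹ * ((M:ℂ)*(u⁻¹)^(M-M)/(1-w⁻¹))
      = (M:ℂ) * (u*P - u⁻¹*P') := by
    rw [Nat.sub_self, pow_zero, pow_zero]
    ring
  rw [hE]
  -- per-j telescoping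
  have hν0 : ν ≠ 0 := by
    rw [← hsq]; exact pow_ne_zero _ hξ0
  have hstepE : ∀ j ∈ Icc 1 d, u*(w^j)⁻¹ - u⁻¹*(w^j)
      = -((u - u⁻¹) * ∑ s ∈ range (M*j - 1), (ν ^ ((s:ℤ) + 1 - (m:ℤ)*(j:ℤ)))^l) := by
    intro j hj
    obtain ⟨hj1, hj2⟩ := mem_Icc.mp hj
    have hMj : 1 ≤ M*j := by
      have := Nat.mul_le_mul (show 1 ≤ M by omega) hj1
      omega
    set C := M*j - 1 with hCdef
    have hCcast : (C:ℤ) = (M:ℤ)*j - 1 := by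
      rw [hCdef]
      push_cast [hMj]
      ring
    have e1 : u * (w^j)⁻¹ = u ^ (-(C:ℤ)) := by
      rw [hwdef, ← pow_mul, ← zpow_natCast u (M*j), ← zpow_neg]
      nth_rewrite 1 [← zpow_one u]
      rw [← zpow_add₀ hu0, hCcast]
      congr 1 <;> push_cast <;> ring
    have e2 : u⁻¹ * (w^j) = u ^ ((C:ℤ)) := by
      rw [hwdef, ← pow_mul, ← zpow_natCast u (M*j), ← zpow_neg_one u, ← zpow_add₀ hu0, hCcast]
      congr 1 <;> push_cast <;> ring
    have e3 : ∀ s ∈ range C, u ^ ((C:ℤ) - 1 - 2*(s:ℤ)) = (ν ^ ((s:ℤ) + 1 - (m:ℤ)*(j:ℤ)))^l := by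
      intro s _
      have hu2' : u^(2:ℕ) = (ν^l)⁻¹ := by
        rw [hudef, ← pow_mul, inv_pow, ← hsq, ← pow_mul, mul_comm l 2]
      have hexp : (C:ℤ) - 1 - 2*(s:ℤ) = 2*((m:ℤ)*j - 1 - s) := by
        rw [hCcast, hMdef]
        push_cast
        ring
      rw [hexp, zpow_mul, show (2:ℤ) = ((2:ℕ):ℤ) from rfl, zpow_natCast, hu2']
      rw [← zpow_natCast ν l, ← zpow_neg, ← zpow_mul,
        ← zpow_natCast (ν ^ ((s:ℤ) + 1 - (m:ℤ)*(j:ℤ))) l, ← zpow_mul]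
      congr 1
      ring
    rw [e1, e2, show u ^ (-(C:ℤ)) - u ^ ((C:ℤ)) = -(u ^ ((C:ℤ)) - u ^ (-(C:ℤ))) from by ring,
      ← telesc2 u hu0 C, Finset.sum_congr rfl e3]
  have hPP : u*P - u⁻¹*P' = ∑ j ∈ Icc 1 d, (u*(w^j)⁻¹ - u⁻¹*(w^j)) := by
    rw [hPdef, hP'def, Finset.mul_sum, Finset.mul_sum, ← Finset.sum_sub_distrib]
  rw [hPP, Finset.sum_congr rfl hstepE]
  rw [Finset.sum_neg_distrib, ← Finset.mul_sum]
  have hM2 : ((M:ℕ):ℂ) = 2*(m:ℂ) := by rw [hMdef]; push_cast; ring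
  rw [hM2]
  rw [div_mul_eq_mul_div, div_eq_iff hcne]
  ring

lemma B_lemma {m n : ℕ} (hm : Even m) (hm2 : 2 ≤ m) (hn : 2 ≤ n)
    (hgcd : Nat.gcd m n = 1) :
    ∑ k ∈ range (2*m), 2 * ((-1:ℂ)^n * zeta (2*m) ^ (n*(2*k+1)) - 1) /
        (1 + (zeta (2*m))⁻¹ ^ (2*k+1))
      = 4*(m:ℂ) * (((-1:ℂ)^(n/m) - 1)/2) := by
  have hm0 : m ≠ 0 := by omega
  have hζ : IsPrimitiveRoot (zeta (2*m)) (2*m) := zeta_prim _ (by omega)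
  have hζ0 : zeta (2*m) ≠ 0 := hζ.ne_zero (by omega)
  have h2m : 2 ∣ m := hm.two_dvd
  have hoddn : ¬ (2 ∣ n) := by
    intro h
    have := Nat.dvd_gcd h2m h
    rw [hgcd] at this
    omega
  have hodd : Odd n := Nat.odd_iff.mpr (by omega)
  have hζm : zeta (2*m) ^ m = -1 := by
    rw [zeta, ← Complex.exp_nat_mul]
    have hm0' : ((m:ℕ):ℂ) ≠ 0 := Nat.cast_ne_zero.mpr hm0
    have he : (m:ℂ) * (2*(Real.pi:ℂ)*Complex.I/((2*m:ℕ):ℂ)) = (Real.pi:ℂ) * Complex.I := by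
      push_cast
      field_simp
    rw [he, Complex.exp_pi_mul_I]
  have hbterm : ∀ k ∈ range (2*m),
      2 * ((-1:ℂ)^n * zeta (2*m) ^ (n*(2*k+1)) - 1) / (1 + (zeta (2*m))⁻¹ ^ (2*k+1))
        = -2 * ∑ j ∈ range n, (-1:ℂ)^j * (zeta (2*m) ^ (2*k+1))^(j+1) := by
    intro k _
    set y := zeta (2*m) ^ (2*k+1) with hydef
    have hy0 : y ≠ 0 := pow_ne_zero _ hζ0
    have hyn1 : y ≠ -1 := by
      intro h
      have h2 : zeta (2*m) ^ (2*(2*k+1)) = 1 := by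
        rw [mul_comm 2 (2*k+1), pow_mul, ← hydef, h]
        norm_num
      obtain ⟨c, hc⟩ := (hζ.pow_eq_one_iff_dvd _).mp h2
      have h3 : 2 ∣ m * c := Dvd.dvd.mul_right h2m c
      have e1 : 2*m*c = 2*(m*c) := by ring
      omega
    have hdinv : (zeta (2*m))⁻¹ ^ (2*k+1) = y⁻¹ := by
      rw [inv_pow, ← hydef]
    have hden : (1:ℂ) + y⁻¹ ≠ 0 := by
      intro h
      apply hyn1
      have h4 : y⁻¹ = -1 := by linear_combination h
      rw [← inv_inv y, h4]
      norm_num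
    have hneg : ((-1:ℂ))^n = -1 := hodd.neg_one_pow
    have hpow : zeta (2*m) ^ (n*(2*k+1)) = y^n := by
      rw [hydef, ← pow_mul, mul_comm (2*k+1) n]
    have hg : (1 + y) * ∑ j ∈ range n, (-y)^j = 1 + y^n := by
      have h5 := geom_sum_mul (-y) n
      rw [hodd.neg_pow] at h5
      linear_combination -h5
    have hsum2 : ∑ j ∈ range n, (-1:ℂ)^j * y^(j+1) = y * ∑ j ∈ range n, (-y)^j := by
      rw [Finset.mul_sum]
      refine Finset.sum_congr rfl fun j _ => ?_
      rw [neg_pow]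
      ring
    rw [hneg, hpow, hdinv, div_eq_iff hden, hsum2]
    linear_combination 2*hg + 2*(∑ j ∈ range n, (-y)^j)*(mul_inv_cancel₀ hy0)
  rw [Finset.sum_congr rfl hbterm, ← Finset.mul_sum, Finset.sum_comm]
  have hj : ∀ j ∈ range n, ∑ k ∈ range (2*m), (-1:ℂ)^j * (zeta (2*m) ^ (2*k+1))^(j+1)
      = if m ∣ (j+1) then ((-1:ℂ)^((j+1)-1) * ((2*m:ℕ):ℂ) * zeta (2*m)^(j+1)) else 0 := by
    intro j _
    rw [← Finset.mul_sum]
    have hk : ∀ k ∈ range (2*m), (zeta (2*m) ^ (2*k+1))^(j+1)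
        = zeta (2*m)^(j+1) * (zeta (2*m)^(2*(j+1)))^k := by
      intro k _
      rw [← pow_mul, ← pow_mul, ← pow_add]
      congr 1
      ring
    rw [Finset.sum_congr rfl hk, ← Finset.mul_sum]
    have hchar := char_sum (show 0 < 2*m by omega) (zeta (2*m)^(2*(j+1)))
      (by rw [← pow_mul, show 2*(j+1)*(2*m) = 2*m*(2*(j+1)) from by ring, pow_mul,
        hζ.pow_eq_one, one_pow])
    rw [hchar]
    have hcond : (zeta (2*m)^(2*(j+1)) = 1) = (m ∣ (j+1)) := by
      apply propext
      rw [hζ.pow_eq_one_iff_dvd]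
      constructor
      · rintro ⟨c, hc⟩
        refine ⟨c, ?_⟩
        have e1 : 2*m*c = 2*(m*c) := by ring
        omega
      · rintro ⟨c, hc⟩
        refine ⟨c, ?_⟩
        have e1 : 2*m*c = 2*(m*c) := by ring
        omega
    simp only [hcond]
    split_ifs with h
    · simp only [Nat.add_sub_cancel]
      ring
    · simp
  rw [Finset.sum_congr rfl hj,
    sum_dvd_shift (show 0 < m by omega) (fun t => (-1:ℂ)^(t-1) * ((2*m:ℕ):ℂ) * zeta (2*m)^t) n]
  have hq : ∀ q ∈ Icc 1 (n/m), (-1:ℂ)^(m*q-1) * ((2*m:ℕ):ℂ) * zeta (2*m)^(m*q)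
      = ((2*m:ℕ):ℂ) * ((-1:ℂ)^q * (-1)) := by
    intro q hq'
    obtain ⟨hq1, hq2⟩ := mem_Icc.mp hq'
    have h6 : zeta (2*m)^(m*q) = (-1:ℂ)^q := by rw [pow_mul, hζm]
    have h7 : Odd (m*q - 1) := by
      obtain ⟨t, ht⟩ := hm
      have e1 : m*q = 2*(t*q) := by rw [ht]; ring
      have e2 : 1 ≤ t*q := Nat.one_le_iff_ne_zero.mpr (Nat.mul_ne_zero (by omega) (by omega))
      exact ⟨t*q - 1, by omega⟩
    have h8 : (-1:ℂ)^(m*q-1) = -1 := h7.neg_one_pow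
    rw [h6, h8]
    ring
  rw [Finset.sum_congr rfl hq, ← Finset.mul_sum]
  have h10 : ∑ q ∈ Icc 1 (n/m), ((-1:ℂ)^q * (-1)) = (∑ q ∈ Icc 1 (n/m), (-1:ℂ)^q) * (-1) := by
    rw [Finset.sum_mul]
  rw [h10, neg_one_Icc]
  push_cast
  ring

lemma Esum_lemma {m n : ℕ} (hm2 : 2 ≤ m) (hn : 2 ≤ n) :
    ∑ l ∈ range n, ((-4*(m:ℂ)) * ∑ j ∈ Icc 1 (n/m), ∑ s ∈ range (2*m*j - 1),
        ((zeta n) ^ ((s:ℤ) + 1 - (m:ℤ)*(j:ℤ)))^l)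
      = (-4*(m:ℂ)) * ((((n/m:ℕ)):ℂ) * (n:ℂ)) := by
  have hν : IsPrimitiveRoot (zeta n) n := zeta_prim n (by omega)
  have hmdn : m * (n/m) ≤ n := Nat.mul_div_le n m
  rw [← Finset.mul_sum]
  congr 1
  rw [Finset.sum_comm]
  have hjval : ∀ j ∈ Icc 1 (n/m),
      ∑ l ∈ range n, ∑ s ∈ range (2*m*j - 1), ((zeta n) ^ ((s:ℤ) + 1 - (m:ℤ)*(j:ℤ)))^l
        = (n:ℂ) := by
    intro j hj
    obtain ⟨hj1, hj2⟩ := mem_Icc.mp hj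
    have hmj1 : 1 ≤ m*j := Nat.one_le_iff_ne_zero.mpr (Nat.mul_ne_zero (by omega) (by omega))
    have e2 : 2*m*j = 2*(m*j) := by ring
    rw [Finset.sum_comm]
    have hstep : ∀ s ∈ range (2*m*j - 1),
        ∑ l ∈ range n, ((zeta n) ^ ((s:ℤ) + 1 - (m:ℤ)*(j:ℤ)))^l
          = if s = m*j - 1 then (n:ℂ) else 0 := by
      intro s hs
      have hs' : s < 2*m*j - 1 := mem_range.mp hs
      have hpow1 : ((zeta n) ^ ((s:ℤ) + 1 - (m:ℤ)*(j:ℤ)))^n = 1 := by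
        rw [← zpow_natCast ((zeta n) ^ ((s:ℤ) + 1 - (m:ℤ)*(j:ℤ))) n, ← zpow_mul, mul_comm,
          zpow_mul, zpow_natCast, hν.pow_eq_one, one_zpow]
      rw [char_sum (by omega) _ hpow1]
      congr 1
      apply propext
      have hz1 : ((2*m*j - 1 : ℕ):ℤ) = 2*((m:ℤ)*j) - 1 := by
        rw [Nat.cast_sub (by omega)]
        push_cast
        ring
      have hz2 : (s:ℤ) < ((2*m*j - 1:ℕ):ℤ) := by exact_mod_cast hs'
      have hz3 : (m:ℤ)*j ≤ (n:ℤ) := by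
        have h4 : m*j ≤ n := le_trans (Nat.mul_le_mul_left m hj2) hmdn
        exact_mod_cast h4
      constructor
      · intro h
        obtain ⟨c, hc⟩ := (hν.zpow_eq_one_iff_dvd _).mp h
        have hE0 : (s:ℤ) + 1 - (m:ℤ)*j = 0 := by
          by_contra hne
          have hdvd : (n:ℤ) ∣ ((s:ℤ) + 1 - (m:ℤ)*(j:ℤ)) := ⟨c, hc⟩
          have h1 : (n:ℤ) ≤ |(s:ℤ) + 1 - (m:ℤ)*(j:ℤ)| :=
            Int.le_of_dvd (abs_pos.mpr hne) ((dvd_abs _ _).mpr hdvd)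
          have h2 : |(s:ℤ) + 1 - (m:ℤ)*(j:ℤ)| ≤ (m:ℤ)*j - 1 := by
            rw [abs_le]
            constructor <;> omega
          omega
        omega
      · intro h
        subst h
        have he : ((m*j-1 : ℕ):ℤ) + 1 - (m:ℤ)*(j:ℤ) = 0 := by
          rw [Nat.cast_sub hmj1]
          push_cast
          ring
        rw [he, zpow_zero]
    rw [Finset.sum_congr rfl hstep,
      Finset.sum_ite_eq' (range (2*m*j - 1)) (m*j - 1) (fun _ => (n:ℂ))]
    rw [if_pos (mem_range.mpr (by omega))]
  rw [Finset.sum_congr rfl hjval, Finset.sum_const, Nat.card_Icc, nsmul_eq_mul]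
  congr 1

lemma E0_lemma {m n : ℕ} (hm2 : 2 ≤ m) (hn : 2 ≤ n) :
    ((-4*(m:ℂ)) * ∑ j ∈ Icc 1 (n/m), ∑ s ∈ range (2*m*j - 1),
        ((zeta n) ^ ((s:ℤ) + 1 - (m:ℤ)*(j:ℤ)))^(0:ℕ))
      = (-4*(m:ℂ)) * (2*(m:ℂ)*((((n/m:ℕ)):ℂ)*((((n/m:ℕ)):ℂ)+1)/2) - (((n/m:ℕ)):ℂ)) := by
  congr 1
  have h1 : ∀ j ∈ Icc 1 (n/m),
      ∑ s ∈ range (2*m*j - 1), ((zeta n) ^ ((s:ℤ) + 1 - (m:ℤ)*(j:ℤ)))^(0:ℕ)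
        = 2*(m:ℂ)*(j:ℂ) - 1 := by
    intro j hj
    obtain ⟨hj1, _⟩ := mem_Icc.mp hj
    have hmj1 : 1 ≤ m*j := Nat.one_le_iff_ne_zero.mpr (Nat.mul_ne_zero (by omega) (by omega))
    have e2 : 2*m*j = 2*(m*j) := by ring
    simp only [pow_zero, Finset.sum_const, card_range, nsmul_eq_mul, mul_one]
    rw [Nat.cast_sub (by omega)]
    push_cast
    ring
  rw [Finset.sum_congr rfl h1, Finset.sum_sub_distrib, ← Finset.mul_sum, gauss_Icc,
    Finset.sum_const, Nat.card_Icc, nsmul_eq_mul, mul_one]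
  congr 2

/-- Let `m ≥ 2` be even and `n ≥ 2` with `gcd(m, n) = 1`, and set
`δ := ⌊n/m⌋`.  With
`A := ∑_{l=0}^{n-1} ∑_{k=1}^{2m-1} 2(ζ_{2m}^{2nk} - 1)/((1 - ζ_{2m}^{-k}ζ_{2n}^{-l})(1 - ζ_{2m}^{-k}ζ_{2n}^{l}))` and
`B := ∑_{l=0}^{n-1} ∑_{k=0}^{2m-1} 2((-1)^n ζ_{2m}^{n(2k+1)} - 1)/(1 + ζ_{2m}^{-(2k+1)})`, one has
`(m + n + 1)/m + (A + B)/(4mn) = δ + 2 + ((-1)^δ - 1)/2`. -/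
theorem stmt_10 (m n : ℕ) (hm : Even m) (hm2 : 2 ≤ m) (hn : 2 ≤ n)
    (hgcd : Nat.gcd m n = 1) :
    ((m : ℂ) + n + 1) / m +
      ((∑ l ∈ Finset.range n, ∑ k ∈ Finset.Icc 1 (2 * m - 1),
          2 * (zeta (2 * m) ^ (2 * n * k) - 1) /
            ((1 - (zeta (2 * m))⁻¹ ^ k * (zeta (2 * n))⁻¹ ^ l) *
              (1 - (zeta (2 * m))⁻¹ ^ k * zeta (2 * n) ^ l))) +
       (∑ l ∈ Finset.range n, ∑ k ∈ Finset.range (2 * m),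
          2 * ((-1 : ℂ) ^ n * zeta (2 * m) ^ (n * (2 * k + 1)) - 1) /
            (1 + (zeta (2 * m))⁻¹ ^ (2 * k + 1)))) / (4 * (m : ℂ) * n)
      = ((n / m : ℕ) : ℂ) + 2 + ((-1 : ℂ) ^ (n / m) - 1) / 2 := by
  have hm0 : (m:ℂ) ≠ 0 := Nat.cast_ne_zero.mpr (by omega)
  have hn0 : (n:ℂ) ≠ 0 := Nat.cast_ne_zero.mpr (by omega)
  have hB : ∑ l ∈ Finset.range n, ∑ k ∈ Finset.range (2*m),
      2 * ((-1:ℂ)^n * zeta (2*m) ^ (n*(2*k+1)) - 1) / (1 + (zeta (2*m))⁻¹ ^ (2*k+1))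
      = (n:ℂ) * (4*(m:ℂ) * (((-1:ℂ)^(n/m) - 1)/2)) := by
    rw [Finset.sum_const, card_range, nsmul_eq_mul, B_lemma hm hm2 hn hgcd]
  have hsplit : ∀ f : ℕ → ℂ, ∑ l ∈ range n, f l = ∑ l ∈ range (n-1), f (l+1) + f 0 := by
    intro f
    conv_lhs => rw [show n = (n-1)+1 by omega, Finset.sum_range_succ']
  have hA : ∑ l ∈ Finset.range n, ∑ k ∈ Finset.Icc 1 (2*m-1),
      2 * (zeta (2*m) ^ (2*n*k) - 1) /
        ((1 - (zeta (2*m))⁻¹^k * (zeta (2*n))⁻¹^l) * (1 - (zeta (2*m))⁻¹^k * zeta (2*n)^l))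
      = ((-4*(m:ℂ)) * ((((n/m:ℕ)):ℂ) * (n:ℂ))
          - (-4*(m:ℂ)) * (2*(m:ℂ)*((((n/m:ℕ)):ℂ)*((((n/m:ℕ)):ℂ)+1)/2) - (((n/m:ℕ)):ℂ)))
        + (-((2*m:ℕ) - 2*((n % m : ℕ)):ℂ) * ((2*m:ℕ) - 1)
            + 2 * ((((2*m:ℕ):ℂ) - 2*((n % m : ℕ)) - 1) * (2*m:ℕ)
              - ((2*m:ℕ) - 2*((n % m : ℕ)):ℂ) * (((2*m:ℕ):ℂ) - 2*((n % m : ℕ)) - 1)/2)) := by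
    rw [hsplit]
    have hl0 : (∑ k ∈ Finset.Icc 1 (2*m-1),
        2 * (zeta (2*m) ^ (2*n*k) - 1) /
          ((1 - (zeta (2*m))⁻¹^k * (zeta (2*n))⁻¹^0) * (1 - (zeta (2*m))⁻¹^k * zeta (2*n)^0)))
        = (-((2*m:ℕ) - 2*((n % m : ℕ)):ℂ) * ((2*m:ℕ) - 1)
            + 2 * ((((2*m:ℕ):ℂ) - 2*((n % m : ℕ)) - 1) * (2*m:ℕ)
              - ((2*m:ℕ) - 2*((n % m : ℕ)):ℂ) * (((2*m:ℕ):ℂ) - 2*((n % m : ℕ)) - 1)/2)) := by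
      simp only [pow_zero, mul_one]
      exact inner_A0 hm2 hn hgcd
    have hlpos : ∀ l ∈ range (n-1), (∑ k ∈ Finset.Icc 1 (2*m-1),
        2 * (zeta (2*m) ^ (2*n*k) - 1) /
          ((1 - (zeta (2*m))⁻¹^k * (zeta (2*n))⁻¹^(l+1)) * (1 - (zeta (2*m))⁻¹^k * zeta (2*n)^(l+1))))
        = (-4*(m:ℂ)) * ∑ j ∈ Icc 1 (n/m), ∑ s ∈ range (2*m*j - 1),
            ((zeta n) ^ ((s:ℤ) + 1 - (m:ℤ)*(j:ℤ)))^(l+1) := by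
      intro l hl
      exact inner_A_pos hm2 hn hgcd (l+1) (by omega) (by have := mem_range.mp hl; omega)
    rw [hl0, Finset.sum_congr rfl hlpos]
    have h2 : ∑ l ∈ range (n-1), ((-4*(m:ℂ)) * ∑ j ∈ Icc 1 (n/m), ∑ s ∈ range (2*m*j - 1),
          ((zeta n) ^ ((s:ℤ) + 1 - (m:ℤ)*(j:ℤ)))^(l+1))
        = (∑ l ∈ range n, ((-4*(m:ℂ)) * ∑ j ∈ Icc 1 (n/m), ∑ s ∈ range (2*m*j - 1),
            ((zeta n) ^ ((s:ℤ) + 1 - (m:ℤ)*(j:ℤ)))^l))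
          - ((-4*(m:ℂ)) * ∑ j ∈ Icc 1 (n/m), ∑ s ∈ range (2*m*j - 1),
            ((zeta n) ^ ((s:ℤ) + 1 - (m:ℤ)*(j:ℤ)))^(0:ℕ)) := by
      rw [hsplit (fun l => (-4*(m:ℂ)) * ∑ j ∈ Icc 1 (n/m), ∑ s ∈ range (2*m*j - 1),
        ((zeta n) ^ ((s:ℤ) + 1 - (m:ℤ)*(j:ℤ)))^l)]
      ring
    rw [h2, Esum_lemma hm2 hn, E0_lemma hm2 hn]
  rw [hA, hB]
  have hd := Nat.div_add_mod n m
  have hdc : (m:ℂ)*((n/m:ℕ):ℂ) + ((n%m:ℕ):ℂ) = (n:ℂ) := by exact_mod_cast hd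
  have hrr : ((n%m:ℕ):ℂ) = (n:ℂ) - (m:ℂ)*((n/m:ℕ):ℂ) := by linear_combination hdc
  rw [hrr]
  have h4mn : 4*(m:ℂ)*n ≠ 0 := mul_ne_zero (mul_ne_zero (by norm_num) hm0) hn0
  rw [div_add_div _ _ hm0 h4mn, div_eq_iff (mul_ne_zero hm0 h4mn)]
  push_cast
  ring
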